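/- arXiv:1308.5044 — 3 statements merged into one kernel-verified Lean document; each statement's English description precedes it below -/
import Mathlib

section
/- Optimal strategy for the binary deterministic infinite-horizon model: define the controls u1 n i := y1 n (i−2) for i ≤ 0 and u1 n i := false for i ≥ 1 (so u1 respects the power limit), and u2 n i := y2 n (i−2) for i ≥ 3 and u2 n i := false for i ≤ 2. Then for every choice of disturbance sequence w and observation-noise sequence v satisfying the support conditions, the resulting closed-loop state satisfies x n i = false for all n ≥ 0 and all i ≥ 2; i.e., this strategy achieves state-distortion upper level d = 2. -/
/-- Optimal strategy for the binary deterministic infinite-horizon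
model (parameters `a' = 2`, `σv2' = 1`, `p1' = 1`): with controls
`u1 n i = y1 n (i−2)` for `i ≤ 0` (and `false` for `i ≥ 1`, respecting the power limit)
and `u2 n i = y2 n (i−2)` for `i ≥ 3` (and `false` for `i ≤ 2`), where `y1 n = x n` and
`y2 n i = x n i ⊕ v n i`, the closed-loop state satisfies `x n i = false` for all
`n ≥ 0` and all `i ≥ 2`; i.e., the strategy achieves state-distortion upper level 2. -/
theorem statement4 (w v : ℕ → ℤ → Bool)
    (hw : ∀ n : ℕ, ∀ i : ℤ, 0 ≤ i → w n i = false)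
    (hv : ∀ n : ℕ, ∀ i : ℤ, 1 ≤ i → v n i = false)
    (x u1 u2 y1 y2 : ℕ → ℤ → Bool)
    (hx0 : ∀ i : ℤ, x 0 i = false)
    (hy1 : ∀ n : ℕ, ∀ i : ℤ, y1 n i = x n i)
    (hy2 : ∀ n : ℕ, ∀ i : ℤ, y2 n i = xor (x n i) (v n i))
    (hu1 : ∀ n : ℕ, ∀ i : ℤ, u1 n i = if i ≤ 0 then y1 n (i - 2) else false)
    (hu2 : ∀ n : ℕ, ∀ i : ℤ, u2 n i = if 3 ≤ i then y2 n (i - 2) else false)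
    (hdyn : ∀ n : ℕ, ∀ i : ℤ,
      x (n + 1) i = xor (xor (xor (x n (i - 2)) (u1 n i)) (u2 n i)) (w n i)) :
    ∀ n : ℕ, ∀ i : ℤ, 2 ≤ i → x n i = false := by
  have key : ∀ n : ℕ, x n 0 = false ∧ ∀ i : ℤ, 2 ≤ i → x n i = false := by
    intro n
    induction n with
    | zero => exact ⟨hx0 0, fun i _ => hx0 i⟩
    | succ n ih =>
      obtain ⟨h0, h2⟩ := ih
      constructor
      · rw [hdyn n 0, hu1 n 0, hu2 n 0, hw n 0 le_rfl, hy1]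
        norm_num
      · intro i hi
        rw [hdyn n i, hu1 n i, hu2 n i, hw n i (by omega)]
        rcases lt_or_ge i 3 with h3 | h3
        · have : i = 2 := by omega
          subst this
          norm_num [h0]
        · rw [if_neg (by omega), if_pos h3, hy2, hv n (i - 2) (by omega)]
          simp
  exact fun n i hi => (key n).2 i hi
end

section
/- Quantized-state estimation error bound: let d ≠ 0 and 0 ≤ w < |d|, let o ∈ [0,1], and let X, V be independent real random variables with X square-integrable, P(X ∉ T(d, w)) ≤ o, and V centered Gaussian with variance σ² for some σ > 0. Then E[( X − Q_d(X + V) )²] ≤ E[( X − Q_d(X) )²] + Σ_{i=1}^{∞} ( i·|d| + w/2 )² · 2·Q( ((2i−1)·|d| − w)/(2σ) ) + o·( (3|d|/2)² + Σ_{i=2}^{∞} ( i·|d| + |d|/2 )² · 2·Q( ((i−1)·|d|)/σ ) ), where both series on the right-hand side converge. -/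
open MeasureTheory ProbabilityTheory
open scoped ENNReal NNReal

/-- The comb lattice `T(d, w) = ⋃_{i ∈ ℤ} [i·d − w/2, i·d + w/2] ⊆ ℝ`. -/
def comb (d w : ℝ) : Set ℝ := ⋃ i : ℤ, Set.Icc (i * d - w / 2) (i * d + w / 2)

/-- Round-to-nearest quantization of `y` to the lattice `c·ℤ`. -/
noncomputable def quant (c y : ℝ) : ℝ := c * ⌊y / c + 1 / 2⌋

/-- The standard Gaussian tail function `Q(x) = (1/√(2π)) ∫_x^∞ exp(−u²/2) du`. -/
noncomputable def gaussQ (x : ℝ) : ℝ :=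
  (Real.sqrt (2 * Real.pi))⁻¹ * ∫ u in Set.Ioi x, Real.exp (-u ^ 2 / 2)

/-!
Write `R = X - Q_d(X)` for the quantization residual. Since `Q_d` commutes with shifts by `dℤ`,
`X - Q_d(X + V) = R - Q_d(R + V)`. If `R + V` is quantized to the level `k`, i.e.
`|Q_d(R + V)| = k|d|`, then `(R - Q_d(R + V))² ≤ R² + k|d|(k|d| + 2ρ)` whenever `|R| ≤ ρ`, and
this level is reached only if `|V| ≥ k|d| - |d|/2 - ρ`. On the comb `ρ = w/2`, so level `k` costs
the Gaussian tail `2Q(((2k-1)|d| - w)/(2σ))`; off the comb `ρ = |d|/2`, and by independence the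
probability of level `k ≥ 2` factors as `P(X ∉ T) · P(|V| ≥ (k-1)|d|) ≤ o · 2Q((k-1)|d|/σ)`.
Summing over the levels gives the two series, which converge since `Q(x) ≤ √2 e^{-x²/4}`.
-/

open Set

section Quantizer

variable {c : ℝ}

noncomputable def quantLevel (c y : ℝ) : ℕ := ⌊y / c + 1 / 2⌋.natAbs

lemma measurable_quant (c : ℝ) : Measurable (quant c) :=
  (measurable_from_top.comp ((measurable_id.div_const c).add_const _).floor).const_mul c

lemma measurable_quantLevel (c : ℝ) : Measurable (quantLevel c) :=
  measurable_from_top.comp ((measurable_id.div_const c).add_const _).floor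

lemma abs_quant_eq (c y : ℝ) : |quant c y| = quantLevel c y * |c| := by
  rw [quant, quantLevel, abs_mul, Nat.cast_natAbs, Int.cast_abs, mul_comm]

lemma quant_add_mul_intCast (hc : c ≠ 0) (y : ℝ) (k : ℤ) :
    quant c (y + c * k) = quant c y + c * k := by
  have : (y + c * k) / c + 1 / 2 = (y / c + 1 / 2) + k := by field_simp; ring
  rw [quant, quant, this, Int.floor_add_intCast]
  push_cast
  ring

lemma abs_sub_quant_le (hc : c ≠ 0) (y : ℝ) : |y - quant c y| ≤ |c| / 2 := by
  have h₁ : (⌊y / c + 1 / 2⌋ : ℝ) ≤ y / c + 1 / 2 := Int.floor_le _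
  have h₂ : y / c + 1 / 2 < ⌊y / c + 1 / 2⌋ + 1 := Int.lt_floor_add_one _
  have : |y / c - ⌊y / c + 1 / 2⌋| ≤ 1 / 2 := abs_le.mpr ⟨by linarith, by linarith⟩
  calc |y - quant c y| = |c| * |y / c - ⌊y / c + 1 / 2⌋| := by
        rw [← abs_mul, quant, mul_sub, mul_div_cancel₀ _ hc]
    _ ≤ |c| * (1 / 2) := by gcongr
    _ = |c| / 2 := by ring

lemma quantLevel_mul_le (hc : c ≠ 0) (y : ℝ) : quantLevel c y * |c| ≤ |y| + |c| / 2 := by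
  rw [← abs_quant_eq]
  have := abs_sub_quant_le hc y
  have := abs_sub_abs_le_abs_sub (quant c y) y
  rw [abs_sub_comm] at this
  linarith

lemma quant_eq_of_abs_sub_lt {y : ℝ} {k : ℤ} (h : |y - k * c| < |c| / 2) :
    quant c y = k * c := by
  have hc : 0 < |c| := by linarith [abs_nonneg (y - k * c)]
  have : |y / c - k| < 1 / 2 := by
    rw [show y / c - k = (y - k * c) / c by field_simp [abs_pos.mp hc], abs_div,
      div_lt_iff₀ hc]
    linarith
  rw [abs_lt] at this
  rw [quant, (Int.floor_eq_iff (z := k)).mpr ⟨by linarith, by linarith⟩, mul_comm]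

lemma abs_sub_quant_le_of_mem_comb {w x : ℝ} (hw : w < |c|) (hx : x ∈ comb c w) :
    |x - quant c x| ≤ w / 2 := by
  obtain ⟨k, hk⟩ := mem_iUnion.mp hx
  have hxk : |x - k * c| ≤ w / 2 := abs_le.mpr ⟨by linarith [hk.1], by linarith [hk.2]⟩
  rwa [quant_eq_of_abs_sub_lt (hxk.trans_lt (by linarith))]

lemma sub_quant_add_eq (hc : c ≠ 0) (x v : ℝ) :
    x - quant c (x + v) = (x - quant c x) - quant c ((x - quant c x) + v) := by
  have : x + v = (x - quant c x + v) + c * ⌊x / c + 1 / 2⌋ := by rw [quant]; ring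
  rw [this, quant_add_mul_intCast hc]
  simp only [quant]
  ring

end Quantizer

section GaussianTail

lemma gaussQ_nonneg (x : ℝ) : 0 ≤ gaussQ x :=
  mul_nonneg (inv_nonneg.mpr (Real.sqrt_nonneg _))
    (setIntegral_nonneg measurableSet_Ioi fun _ _ => (Real.exp_pos _).le)

lemma gaussQ_le_sqrt_two_mul_exp {x : ℝ} (hx : 0 ≤ x) :
    gaussQ x ≤ √2 * Real.exp (-x ^ 2 / 4) := by
  have hint : ∀ b : ℝ, 0 < b → Integrable fun u : ℝ => Real.exp (-u ^ 2 / b) := fun b hb => by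
    refine (integrable_exp_neg_mul_sq (inv_pos.mpr hb)).congr (ae_of_all _ fun u => ?_)
    ring_nf
  have hfull : ∫ u, Real.exp (-u ^ 2 / 4) = √2 * √(2 * Real.pi) := by
    rw [← Real.sqrt_mul zero_le_two, show (2 : ℝ) * (2 * Real.pi) = Real.pi / 4⁻¹ by ring,
      ← integral_gaussian]
    congr with u
    ring_nf
  -- On `u > x ≥ 0` we have `u² / 2 ≥ x² / 4 + u² / 4`.
  have htail : ∫ u in Ioi x, Real.exp (-u ^ 2 / 2) ≤
      ∫ u in Ioi x, Real.exp (-x ^ 2 / 4) * Real.exp (-u ^ 2 / 4) := by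
    refine setIntegral_mono_on (hint 2 two_pos).integrableOn
      ((hint 4 four_pos).const_mul _).integrableOn measurableSet_Ioi fun u hu => ?_
    rw [← Real.exp_add, Real.exp_le_exp]
    nlinarith [mem_Ioi.mp hu]
  calc gaussQ x ≤ (√(2 * Real.pi))⁻¹ * ∫ u, Real.exp (-x ^ 2 / 4) * Real.exp (-u ^ 2 / 4) := by
        refine mul_le_mul_of_nonneg_left (htail.trans ?_) (by positivity)
        exact setIntegral_le_integral ((hint 4 four_pos).const_mul _)
          (ae_of_all _ fun u => by positivity)
    _ = √2 * Real.exp (-x ^ 2 / 4) := by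
        rw [integral_const_mul, hfull]
        field_simp

lemma summable_add_one_sq_mul_geometric {r : ℝ} (h₀ : 0 ≤ r) (h₁ : r < 1) :
    Summable fun i : ℕ => ((i : ℝ) + 1) ^ 2 * r ^ i := by
  have hr : ‖r‖ < 1 := by rwa [Real.norm_of_nonneg h₀]
  have := ((summable_pow_mul_geometric_of_norm_lt_one 2 hr).add
    ((summable_pow_mul_geometric_of_norm_lt_one 1 hr).mul_left 2)).add
    (summable_geometric_of_lt_one h₀ h₁)
  exact this.congr fun i => by ring

lemma summable_sq_mul_gaussQ {a b : ℝ} (ha : 0 < a) (hb : 0 ≤ b) (c e : ℝ) :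
    Summable fun i : ℕ => (c * i + e) ^ 2 * (2 * gaussQ (a * i + b)) := by
  set r := Real.exp (-a ^ 2 / 4)
  have hr : r < 1 := Real.exp_lt_one_iff.mpr (by nlinarith)
  refine Summable.of_nonneg_of_le (fun i => by positivity [gaussQ_nonneg (a * i + b)])
    (fun i => ?_) (((summable_add_one_sq_mul_geometric (Real.exp_pos _).le hr).mul_left
      (2 * √2 * (|c| + |e|) ^ 2)))
  have hi : (i : ℝ) ≤ (i : ℝ) ^ 2 := by
    exact_mod_cast Nat.le_self_pow two_ne_zero i
  have hpoly : (c * i + e) ^ 2 ≤ ((|c| + |e|) * ((i : ℝ) + 1)) ^ 2 := by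
    refine sq_le_sq' ?_ ?_ <;>
    nlinarith [abs_nonneg c, abs_nonneg e, neg_abs_le c, le_abs_self c, neg_abs_le e,
      le_abs_self e, (Nat.cast_nonneg i : (0 : ℝ) ≤ i)]
  have hexp : Real.exp (-(a * i + b) ^ 2 / 4) ≤ r ^ i := by
    rw [← Real.exp_nat_mul, Real.exp_le_exp]
    nlinarith [mul_nonneg (mul_nonneg ha.le (Nat.cast_nonneg i)) hb]
  calc (c * i + e) ^ 2 * (2 * gaussQ (a * i + b))
      ≤ ((|c| + |e|) * ((i : ℝ) + 1)) ^ 2 * (2 * (√2 * r ^ i)) := by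
        have hQ := (gaussQ_le_sqrt_two_mul_exp (by positivity : 0 ≤ a * i + b)).trans
          (mul_le_mul_of_nonneg_left hexp (Real.sqrt_nonneg 2))
        gcongr
        exact mul_nonneg zero_le_two (gaussQ_nonneg _)
    _ = 2 * √2 * (|c| + |e|) ^ 2 * (((i : ℝ) + 1) ^ 2 * r ^ i) := by ring

lemma setIntegral_Ioi_gaussianPDFReal {σ : ℝ} (hσ : 0 < σ) (s : ℝ) :
    ∫ x in Ioi s, gaussianPDFReal 0 (σ ^ 2).toNNReal x = gaussQ (s / σ) := by
  have hpdf : ∀ x, gaussianPDFReal 0 (σ ^ 2).toNNReal x =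
      σ⁻¹ * ((√(2 * Real.pi))⁻¹ * Real.exp (-(σ⁻¹ * x) ^ 2 / 2)) := fun x => by
    rw [gaussianPDFReal, Real.coe_toNNReal _ (sq_nonneg σ), Real.sqrt_mul (by positivity),
      Real.sqrt_sq hσ.le, sub_zero]
    field_simp
  simp_rw [hpdf]
  rw [integral_const_mul, integral_comp_mul_left_Ioi
    (fun u => (√(2 * Real.pi))⁻¹ * Real.exp (-u ^ 2 / 2)) s (inv_pos.mpr hσ), integral_const_mul,
    gaussQ, smul_eq_mul, inv_inv, inv_mul_cancel_left₀ hσ.ne', inv_mul_eq_div σ s]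

lemma gaussianReal_Ici {σ : ℝ} (hσ : 0 < σ) (s : ℝ) :
    gaussianReal 0 (σ ^ 2).toNNReal (Ici s) = ENNReal.ofReal (gaussQ (s / σ)) := by
  rw [gaussianReal_apply_eq_integral _ (by simpa using hσ.ne'), integral_Ici_eq_integral_Ioi,
    setIntegral_Ioi_gaussianPDFReal hσ]

lemma gaussianReal_le_abs_le {σ : ℝ} (hσ : 0 < σ) (t : ℝ) :
    gaussianReal 0 (σ ^ 2).toNNReal {x | t ≤ |x|} ≤ ENNReal.ofReal (2 * gaussQ (t / σ)) := by
  set γ := gaussianReal 0 (σ ^ 2).toNNReal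
  have hsymm : γ (Iic (-t)) = γ (Ici t) := by
    have hneg : γ.map (fun x => -x) = γ := by rw [gaussianReal_map_neg, neg_zero]
    rw [← hneg, Measure.map_apply measurable_neg measurableSet_Iic, neg_preimage, neg_Iic,
      neg_neg, hneg]
  have hsub : {x : ℝ | t ≤ |x|} ⊆ Iic (-t) ∪ Ici t := fun x hx => by
    rcases le_abs'.mp (show t ≤ |x| from hx) with h | h
    · exact Or.inl (by rw [mem_Iic]; linarith)
    · exact Or.inr h
  calc γ {x | t ≤ |x|} ≤ γ (Iic (-t)) + γ (Ici t) :=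
        (measure_mono hsub).trans (measure_union_le _ _)
    _ = ENNReal.ofReal (2 * gaussQ (t / σ)) := by
      rw [hsymm, gaussianReal_Ici hσ, ← ENNReal.ofReal_add (gaussQ_nonneg _) (gaussQ_nonneg _),
        two_mul]

lemma summable_on_comb {d w σ : ℝ} (hd : d ≠ 0) (hw : w < |d|) (hσ : 0 < σ) :
    Summable fun i : ℕ => (((i : ℝ) + 1) * |d| + w / 2) ^ 2 *
      (2 * gaussQ (((2 * ((i : ℝ) + 1) - 1) * |d| - w) / (2 * σ))) := by
  have hd' : 0 < |d| := abs_pos.mpr hd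
  refine (summable_sq_mul_gaussQ (a := |d| / σ) (b := (|d| - w) / (2 * σ)) (by positivity)
    (div_nonneg (by linarith) (by positivity)) |d| (|d| + w / 2)).congr fun i => ?_
  congr 1
  · ring
  · congr 2
    field_simp
    ring

lemma summable_off_comb {d σ : ℝ} (hd : d ≠ 0) (hσ : 0 < σ) :
    Summable fun i : ℕ => (((i : ℝ) + 2) * |d| + |d| / 2) ^ 2 *
      (2 * gaussQ ((((i : ℝ) + 1) * |d|) / σ)) := by
  have hd' : 0 < |d| := abs_pos.mpr hd
  refine (summable_sq_mul_gaussQ (a := |d| / σ) (b := |d| / σ) (by positivity) (by positivity)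
    |d| (2 * |d| + |d| / 2)).congr fun i => ?_
  congr 1
  · ring
  · congr 2
    field_simp

end GaussianTail

section Series

lemma tsum_ofReal_mul_le_ofReal_tsum {a b c : ℕ → ℝ} {p : ℕ → ℝ≥0∞} (hab : ∀ i, a i ≤ b i)
    (hb : ∀ i, 0 ≤ b i) (hc : ∀ i, 0 ≤ c i) (hp : ∀ i, p i ≤ ENNReal.ofReal (c i))
    (hs : Summable fun i => b i * c i) :
    ∑' i, ENNReal.ofReal (a i) * p i ≤ ENNReal.ofReal (∑' i, b i * c i) := by
  rw [ENNReal.ofReal_tsum_of_nonneg (fun i => mul_nonneg (hb i) (hc i)) hs]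
  refine ENNReal.tsum_le_tsum fun i => ?_
  rw [ENNReal.ofReal_mul (hb i)]
  exact mul_le_mul' (ENNReal.ofReal_le_ofReal (hab i)) (hp i)

variable {d w σ : ℝ}

lemma tsum_on_comb_le {p : ℕ → ℝ≥0∞}
    (hp : ∀ i : ℕ, p (i + 1) ≤
      ENNReal.ofReal (2 * gaussQ (((2 * ((i : ℝ) + 1) - 1) * |d| - w) / (2 * σ))))
    (hs : Summable fun i : ℕ => (((i : ℝ) + 1) * |d| + w / 2) ^ 2 *
      (2 * gaussQ (((2 * ((i : ℝ) + 1) - 1) * |d| - w) / (2 * σ)))) :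
    ∑' k : ℕ, ENNReal.ofReal (k * |d| * (k * |d| + w)) * p k ≤
      ENNReal.ofReal (∑' i : ℕ, (((i : ℝ) + 1) * |d| + w / 2) ^ 2 *
        (2 * gaussQ (((2 * ((i : ℝ) + 1) - 1) * |d| - w) / (2 * σ)))) := by
  rw [tsum_eq_zero_add' ENNReal.summable]
  simp only [CharP.cast_eq_zero, zero_mul, ENNReal.ofReal_zero, zero_add, Nat.cast_add,
    Nat.cast_one]
  exact tsum_ofReal_mul_le_ofReal_tsum (fun i => by nlinarith [sq_nonneg w]) (fun _ => sq_nonneg _)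
    (fun _ => mul_nonneg zero_le_two (gaussQ_nonneg _)) hp hs

lemma tsum_off_comb_le {o : ℝ} (ho : 0 ≤ o) {p : ℕ → ℝ≥0∞} (hp₁ : p 1 ≤ ENNReal.ofReal o)
    (hp : ∀ i : ℕ, p (i + 2) ≤ ENNReal.ofReal (o * (2 * gaussQ ((((i : ℝ) + 1) * |d|) / σ))))
    (hs : Summable fun i : ℕ => (((i : ℝ) + 2) * |d| + |d| / 2) ^ 2 *
      (2 * gaussQ ((((i : ℝ) + 1) * |d|) / σ))) :
    ∑' k : ℕ, ENNReal.ofReal (k * |d| * (k * |d| + |d|)) * p k ≤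
      ENNReal.ofReal (o * ((3 * |d| / 2) ^ 2 + ∑' i : ℕ, (((i : ℝ) + 2) * |d| + |d| / 2) ^ 2 *
        (2 * gaussQ ((((i : ℝ) + 1) * |d|) / σ)))) := by
  set c := fun i : ℕ => 2 * gaussQ ((((i : ℝ) + 1) * |d|) / σ)
  have hc : ∀ i, 0 ≤ c i := fun i => mul_nonneg zero_le_two (gaussQ_nonneg _)
  have hrhs : o * ((3 * |d| / 2) ^ 2 + ∑' i : ℕ, (((i : ℝ) + 2) * |d| + |d| / 2) ^ 2 * c i) =
      (3 * |d| / 2) ^ 2 * o + ∑' i : ℕ, (((i : ℝ) + 2) * |d| + |d| / 2) ^ 2 * (o * c i) := by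
    rw [mul_add, ← tsum_mul_left, mul_comm o]
    congr 2 with i
    ring
  rw [hrhs, ENNReal.ofReal_add (by positivity) (tsum_nonneg fun i => by positivity [hc i]),
    tsum_eq_zero_add' ENNReal.summable, tsum_eq_zero_add' ENNReal.summable]
  simp only [CharP.cast_eq_zero, zero_mul, ENNReal.ofReal_zero, zero_add, Nat.cast_add,
    Nat.cast_one]
  gcongr
  · rw [ENNReal.ofReal_mul (sq_nonneg _)]
    exact mul_le_mul' (ENNReal.ofReal_le_ofReal (by nlinarith [abs_nonneg d])) hp₁
  · exact tsum_ofReal_mul_le_ofReal_tsum (fun i => by nlinarith [abs_nonneg d])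
      (fun _ => sq_nonneg _) (fun i => mul_nonneg ho (hc i)) hp
      (hs.mul_left o |>.congr fun i => by ring)

end Series

section ErrorBound

variable {Ω : Type*} [MeasurableSpace Ω] {μ : Measure Ω}

lemma lintegral_comp_eq_tsum_mul_measure_preimage {N : Ω → ℕ} (hN : Measurable N)
    (f : ℕ → ℝ≥0∞) : ∫⁻ ω, f (N ω) ∂μ = ∑' k, f k * μ (N ⁻¹' {k}) := by
  rw [← lintegral_map measurable_from_nat hN, lintegral_countable']
  simp_rw [Measure.map_apply hN (measurableSet_singleton _)]

lemma sq_sub_le_sq_add_abs_mul {r q ρ : ℝ} (hr : |r| ≤ ρ) :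
    (r - q) ^ 2 ≤ r ^ 2 + |q| * (|q| + 2 * ρ) := by
  have : -(r * q) ≤ |r| * |q| := by rw [← abs_mul]; exact neg_le_abs _
  nlinarith [sq_abs q, abs_nonneg q]

variable {V : Ω → ℝ} {d w : ℝ}

lemma lintegral_sq_sub_quant_add_le {R : Ω → ℝ} {E : Set Ω} (hR : Measurable R) (hV : Measurable V)
    (hE : MeasurableSet E) (hRd : ∀ ω, |R ω| ≤ |d| / 2) (hRE : ∀ ω ∈ E, |R ω| ≤ w / 2) :
    ∫⁻ ω, ENNReal.ofReal ((R ω - quant d (R ω + V ω)) ^ 2) ∂μ ≤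
      ∫⁻ ω, ENNReal.ofReal (R ω ^ 2) ∂μ
        + ∑' k : ℕ, ENNReal.ofReal (k * |d| * (k * |d| + w)) *
            μ ({ω | quantLevel d (R ω + V ω) = k} ∩ E)
        + ∑' k : ℕ, ENNReal.ofReal (k * |d| * (k * |d| + |d|)) *
            μ ({ω | quantLevel d (R ω + V ω) = k} ∩ Eᶜ) := by
  set N := fun ω => quantLevel d (R ω + V ω)
  have hN : Measurable N := (measurable_quantLevel d).comp (hR.add hV)
  set a := fun k : ℕ => ENNReal.ofReal (k * |d| * (k * |d| + w))
  set b := fun k : ℕ => ENNReal.ofReal (k * |d| * (k * |d| + |d|))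
  have hpoint : ∀ ω, ENNReal.ofReal ((R ω - quant d (R ω + V ω)) ^ 2) ≤
      ENNReal.ofReal (R ω ^ 2) + E.indicator (fun ω => a (N ω)) ω
        + Eᶜ.indicator (fun ω => b (N ω)) ω := fun ω => by
    have key := fun ρ (hρ : |R ω| ≤ ρ) =>
      (ENNReal.ofReal_le_ofReal (sq_sub_le_sq_add_abs_mul (q := quant d (R ω + V ω)) hρ)).trans
        ENNReal.ofReal_add_le
    by_cases hω : ω ∈ E
    · simpa [hω, abs_quant_eq, a, N, mul_add, two_mul] using key _ (hRE ω hω)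
    · simpa [hω, abs_quant_eq, b, N, mul_add, two_mul] using key _ (hRd ω)
  calc ∫⁻ ω, ENNReal.ofReal ((R ω - quant d (R ω + V ω)) ^ 2) ∂μ
      ≤ ∫⁻ ω, (ENNReal.ofReal (R ω ^ 2) + E.indicator (fun ω => a (N ω)) ω
          + Eᶜ.indicator (fun ω => b (N ω)) ω) ∂μ := lintegral_mono hpoint
    _ = _ := by
      have ha : Measurable (E.indicator fun ω => a (N ω)) :=
        ((measurable_from_nat (f := a)).comp hN).indicator hE
      have hb : Measurable (Eᶜ.indicator fun ω => b (N ω)) :=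
        ((measurable_from_nat (f := b)).comp hN).indicator hE.compl
      rw [lintegral_add_right _ hb, lintegral_add_right _ ha,
        lintegral_indicator hE, lintegral_indicator hE.compl,
        lintegral_comp_eq_tsum_mul_measure_preimage hN,
        lintegral_comp_eq_tsum_mul_measure_preimage hN]
      simp_rw [Measure.restrict_apply (hN (measurableSet_singleton _))]
      rfl

lemma measure_quantLevel_eq_inter_le (hd : d ≠ 0) {R : Ω → ℝ} {S : Set Ω} {ρ : ℝ}
    (hR : ∀ ω ∈ S, |R ω| ≤ ρ) (k : ℕ) :
    μ ({ω | quantLevel d (R ω + V ω) = k} ∩ S) ≤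
      μ (V ⁻¹' {x | k * |d| - |d| / 2 - ρ ≤ |x|} ∩ S) := by
  refine measure_mono fun ω ⟨hk, hS⟩ => ⟨?_, hS⟩
  have := quantLevel_mul_le hd (R ω + V ω)
  rw [show quantLevel d (R ω + V ω) = k from hk] at this
  show _ ≤ |V ω|
  linarith [abs_add_le (R ω) (V ω), hR ω hS]

lemma measure_le_abs_le_of_map_eq_gaussianReal {σ : ℝ} (hσ : 0 < σ) (hV : Measurable V)
    (hVlaw : μ.map V = gaussianReal 0 (σ ^ 2).toNNReal) (t : ℝ) :
    μ (V ⁻¹' {x | t ≤ |x|}) ≤ ENNReal.ofReal (2 * gaussQ (t / σ)) := by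
  rw [← Measure.map_apply hV (measurableSet_le measurable_const measurable_abs), hVlaw]
  exact gaussianReal_le_abs_le hσ t

lemma lintegral_sq_sub_quant_add_le_ofReal {X : Ω → ℝ} {o σ : ℝ} (hd : d ≠ 0) (hw : w < |d|)
    (ho : 0 ≤ o) (hσ : 0 < σ) (hindep : IndepFun X V μ) (hX : Measurable X)
    (hV : Measurable V) (hcomb : μ {ω | X ω ∉ comb d w} ≤ ENNReal.ofReal o)
    (hVlaw : μ.map V = gaussianReal 0 (σ ^ 2).toNNReal) :
    ∫⁻ ω, ENNReal.ofReal ((X ω - quant d (X ω + V ω)) ^ 2) ∂μ ≤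
      ∫⁻ ω, ENNReal.ofReal ((X ω - quant d (X ω)) ^ 2) ∂μ
        + ENNReal.ofReal (∑' i : ℕ, (((i : ℝ) + 1) * |d| + w / 2) ^ 2 *
          (2 * gaussQ (((2 * ((i : ℝ) + 1) - 1) * |d| - w) / (2 * σ))))
        + ENNReal.ofReal (o * ((3 * |d| / 2) ^ 2 +
          ∑' i : ℕ, (((i : ℝ) + 2) * |d| + |d| / 2) ^ 2 *
            (2 * gaussQ ((((i : ℝ) + 1) * |d|) / σ)))) := by
  set R := fun ω => X ω - quant d (X ω)
  set E := X ⁻¹' comb d w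
  have hR : Measurable R := hX.sub ((measurable_quant d).comp hX)
  have hT : MeasurableSet (comb d w) := MeasurableSet.iUnion fun _ => measurableSet_Icc
  have hRd : ∀ ω, |R ω| ≤ |d| / 2 := fun ω => abs_sub_quant_le hd (X ω)
  have hRE : ∀ ω ∈ E, |R ω| ≤ w / 2 := fun ω hω => abs_sub_quant_le_of_mem_comb hw hω
  have htail := measure_le_abs_le_of_map_eq_gaussianReal hσ hV hVlaw
  have hon (i : ℕ) : μ ({ω | quantLevel d (R ω + V ω) = i + 1} ∩ E) ≤
      ENNReal.ofReal (2 * gaussQ (((2 * ((i : ℝ) + 1) - 1) * |d| - w) / (2 * σ))) := by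
    refine (measure_quantLevel_eq_inter_le hd hRE (i + 1)).trans
      ((measure_mono inter_subset_left).trans ((htail _).trans_eq ?_))
    congr 3
    field_simp
    push_cast
    ring
  have hoff₁ : μ ({ω | quantLevel d (R ω + V ω) = 1} ∩ Eᶜ) ≤ ENNReal.ofReal o :=
    (measure_mono inter_subset_right).trans hcomb
  have hoff (i : ℕ) : μ ({ω | quantLevel d (R ω + V ω) = i + 2} ∩ Eᶜ) ≤
      ENNReal.ofReal (o * (2 * gaussQ ((((i : ℝ) + 1) * |d|) / σ))) := by
    have hlevel := measure_quantLevel_eq_inter_le (μ := μ) (V := V) hd (S := Eᶜ)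
      (fun ω _ => hRd ω) (i + 2)
    rw [show Eᶜ = X ⁻¹' (comb d w)ᶜ from rfl, hindep.symm.measure_inter_preimage_eq_mul _ _
      (measurableSet_le measurable_const measurable_abs) hT.compl] at hlevel
    refine hlevel.trans ((mul_le_mul' (htail _) hcomb).trans_eq ?_)
    rw [mul_comm, ← ENNReal.ofReal_mul ho]
    congr 4
    push_cast
    ring
  rw [lintegral_congr fun ω => by rw [sub_quant_add_eq hd]]
  exact (lintegral_sq_sub_quant_add_le hR hV (hX hT) hRd hRE).trans
    (add_le_add (add_le_add le_rfl (tsum_on_comb_le hon (summable_on_comb hd hw hσ)))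
      (tsum_off_comb_le ho hoff₁ hoff (summable_off_comb hd hσ)))

lemma integral_sq_sub_quant_add_le [IsFiniteMeasure μ] {X : Ω → ℝ} {o σ : ℝ} (hd : d ≠ 0)
    (hw : w < |d|) (ho : 0 ≤ o) (hσ : 0 < σ) (hindep : IndepFun X V μ) (hX : Measurable X)
    (hV : Measurable V) (hcomb : μ {ω | X ω ∉ comb d w} ≤ ENNReal.ofReal o)
    (hVlaw : μ.map V = gaussianReal 0 (σ ^ 2).toNNReal) :
    ∫ ω, (X ω - quant d (X ω + V ω)) ^ 2 ∂μ ≤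
      (∫ ω, (X ω - quant d (X ω)) ^ 2 ∂μ) +
        (∑' i : ℕ, (((i : ℝ) + 1) * |d| + w / 2) ^ 2 *
          (2 * gaussQ (((2 * ((i : ℝ) + 1) - 1) * |d| - w) / (2 * σ)))) +
        o * ((3 * |d| / 2) ^ 2 +
          ∑' i : ℕ, (((i : ℝ) + 2) * |d| + |d| / 2) ^ 2 *
            (2 * gaussQ ((((i : ℝ) + 1) * |d|) / σ))) := by
  have hR : Measurable fun ω => X ω - quant d (X ω) := hX.sub ((measurable_quant d).comp hX)
  have hR2 : Integrable (fun ω => (X ω - quant d (X ω)) ^ 2) μ :=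
    .of_bound (hR.pow_const 2).aestronglyMeasurable ((|d| / 2) ^ 2) (ae_of_all _ fun ω => by
      rw [Real.norm_of_nonneg (sq_nonneg _), ← sq_abs]
      exact pow_le_pow_left₀ (abs_nonneg _) (abs_sub_quant_le hd _) 2)
  have hR2₀ : 0 ≤ ∫ ω, (X ω - quant d (X ω)) ^ 2 ∂μ := integral_nonneg fun _ => sq_nonneg _
  have hS₁ : 0 ≤ ∑' i : ℕ, (((i : ℝ) + 1) * |d| + w / 2) ^ 2 *
      (2 * gaussQ (((2 * ((i : ℝ) + 1) - 1) * |d| - w) / (2 * σ))) :=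
    tsum_nonneg fun _ => mul_nonneg (sq_nonneg _) (mul_nonneg zero_le_two (gaussQ_nonneg _))
  have hS₂ : 0 ≤ o * ((3 * |d| / 2) ^ 2 + ∑' i : ℕ, (((i : ℝ) + 2) * |d| + |d| / 2) ^ 2 *
      (2 * gaussQ ((((i : ℝ) + 1) * |d|) / σ))) :=
    mul_nonneg ho (add_nonneg (sq_nonneg _) (tsum_nonneg fun _ =>
      mul_nonneg (sq_nonneg _) (mul_nonneg zero_le_two (gaussQ_nonneg _))))
  have hE : Measurable fun ω => (X ω - quant d (X ω + V ω)) ^ 2 :=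
    (hX.sub ((measurable_quant d).comp (hX.add hV))).pow_const 2
  rw [integral_eq_lintegral_of_nonneg_ae (ae_of_all _ fun _ => sq_nonneg _)
    hE.aestronglyMeasurable]
  refine ENNReal.toReal_le_of_le_ofReal (add_nonneg (add_nonneg hR2₀ hS₁) hS₂)
    ((lintegral_sq_sub_quant_add_le_ofReal hd hw ho hσ hindep hX hV hcomb hVlaw).trans_eq ?_)
  rw [← ofReal_integral_eq_lintegral_ofReal hR2 (ae_of_all _ fun _ => sq_nonneg _),
    ← ENNReal.ofReal_add hR2₀ hS₁, ← ENNReal.ofReal_add (add_nonneg hR2₀ hS₁) hS₂]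

end ErrorBound

theorem statement11_general (Ω : Type) [MeasurableSpace Ω] (μ : Measure Ω) [IsProbabilityMeasure μ]
    (X V : Ω → ℝ) (d w o σ : ℝ) (hd : d ≠ 0) (hw : w < |d|)
    (ho0 : 0 ≤ o) (hσ : 0 < σ)
    (hindep : IndepFun X V μ) (hX : MeasureTheory.MemLp X 2 μ) (hmV : Measurable V)
    (hcomb : μ {ω | X ω ∉ comb d w} ≤ ENNReal.ofReal o)
    (hV : Measure.map V μ = gaussianReal 0 (Real.toNNReal (σ ^ 2))) :
    Summable (fun i : ℕ =>
      (((i : ℝ) + 1) * |d| + w / 2) ^ 2 *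
        (2 * gaussQ (((2 * ((i : ℝ) + 1) - 1) * |d| - w) / (2 * σ)))) ∧
    Summable (fun i : ℕ =>
      (((i : ℝ) + 2) * |d| + |d| / 2) ^ 2 * (2 * gaussQ ((((i : ℝ) + 1) * |d|) / σ))) ∧
    ∫ ω, (X ω - quant d (X ω + V ω)) ^ 2 ∂μ ≤
      (∫ ω, (X ω - quant d (X ω)) ^ 2 ∂μ) +
        (∑' i : ℕ, (((i : ℝ) + 1) * |d| + w / 2) ^ 2 *
          (2 * gaussQ (((2 * ((i : ℝ) + 1) - 1) * |d| - w) / (2 * σ)))) +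
        o * ((3 * |d| / 2) ^ 2 +
          ∑' i : ℕ, (((i : ℝ) + 2) * |d| + |d| / 2) ^ 2 *
            (2 * gaussQ ((((i : ℝ) + 1) * |d|) / σ))) := by
  refine ⟨summable_on_comb hd hw hσ, summable_off_comb hd hσ, ?_⟩
  obtain ⟨X', hX', hXX'⟩ := hX.aestronglyMeasurable.aemeasurable
  have hcomb' : μ {ω | X' ω ∉ comb d w} ≤ ENNReal.ofReal o :=
    (measure_congr (hXX'.preimage (comb d w)ᶜ)).symm.trans_le hcomb
  have hnoisy : ∫ ω, (X ω - quant d (X ω + V ω)) ^ 2 ∂μ =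
      ∫ ω, (X' ω - quant d (X' ω + V ω)) ^ 2 ∂μ :=
    integral_congr_ae (hXX'.mono fun ω h => by simp only [h])
  have hclean : ∫ ω, (X ω - quant d (X ω)) ^ 2 ∂μ = ∫ ω, (X' ω - quant d (X' ω)) ^ 2 ∂μ :=
    integral_congr_ae (hXX'.fun_comp fun x => (x - quant d x) ^ 2)
  rw [hnoisy, hclean]
  exact integral_sq_sub_quant_add_le hd hw ho0 hσ (hindep.congr hXX' .rfl) hX' hmV hcomb' hV

/-- Quantized-state estimation error bound: if `d ≠ 0`,
`0 ≤ w < |d|`, `o ∈ [0,1]`, and `X, V` are independent with `X` square-integrable,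
`P(X ∉ T(d, w)) ≤ o`, and `V ~ N(0, σ²)` with `σ > 0`, then
`E[(X − Q_d(X+V))²] ≤ E[(X − Q_d(X))²]
  + Σ_{i=1}^∞ (i|d| + w/2)²·2Q(((2i−1)|d| − w)/(2σ))
  + o·((3|d|/2)² + Σ_{i=2}^∞ (i|d| + |d|/2)²·2Q(((i−1)|d|)/σ))`,
and both series converge. -/
theorem statement11 (Ω : Type) [MeasurableSpace Ω] (μ : Measure Ω) [IsProbabilityMeasure μ]
    (X V : Ω → ℝ) (d w o σ : ℝ) (hd : d ≠ 0) (hw0 : 0 ≤ w) (hw : w < |d|)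
    (ho0 : 0 ≤ o) (ho1 : o ≤ 1) (hσ : 0 < σ)
    (hindep : IndepFun X V μ) (hX : MeasureTheory.MemLp X 2 μ) (hmV : Measurable V)
    (hcomb : μ {ω | X ω ∉ comb d w} ≤ ENNReal.ofReal o)
    (hV : Measure.map V μ = gaussianReal 0 (Real.toNNReal (σ ^ 2))) :
    Summable (fun i : ℕ =>
      (((i : ℝ) + 1) * |d| + w / 2) ^ 2 *
        (2 * gaussQ (((2 * ((i : ℝ) + 1) - 1) * |d| - w) / (2 * σ)))) ∧
    Summable (fun i : ℕ =>
      (((i : ℝ) + 2) * |d| + |d| / 2) ^ 2 * (2 * gaussQ ((((i : ℝ) + 1) * |d|) / σ))) ∧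
    ∫ ω, (X ω - quant d (X ω + V ω)) ^ 2 ∂μ ≤
      (∫ ω, (X ω - quant d (X ω)) ^ 2 ∂μ) +
        (∑' i : ℕ, (((i : ℝ) + 1) * |d| + w / 2) ^ 2 *
          (2 * gaussQ (((2 * ((i : ℝ) + 1) - 1) * |d| - w) / (2 * σ)))) +
        o * ((3 * |d| / 2) ^ 2 +
          ∑' i : ℕ, (((i : ℝ) + 2) * |d| + |d| / 2) ^ 2 *
            (2 * gaussQ ((((i : ℝ) + 1) * |d|) / σ))) :=
  statement11_general Ω μ X V d w o σ hd hw ho0 hσ hindep hX hmV hcomb hV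
end

section
/- Monotonicity of the optimal finite-horizon cost in the initial state (genie lemma): let ξ′ and ξ″ be independent square-integrable real random variables with E[ξ′] = 0, both independent of the noise sequences. Consider two copies of the dynamics driven by the same noise sequences, the first with initial state X0 = ξ′ + ξ″ and the second with initial state X0 = ξ′. Then for every horizon N ≥ 1 and all weights q, r1, r2 ≥ 0, the infimum over causal strategy pairs of (1/N)·Σ_{n=0}^{N−1} ( q·E[x²[n]] + r1·E[u1²[n]] + r2·E[u2²[n]] ) for the first system is greater than or equal to the corresponding infimum for the second system. -/
open MeasureTheory ProbabilityTheory Filter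
open scoped ENNReal NNReal

noncomputable section

namespace LQG

/-- Round-to-nearest quantization of `y` to the lattice `c·ℤ`. -/
def quant (c y : ℝ) : ℝ := c * ⌊y / c + 1 / 2⌋

/-- Remainder of `y` under round-to-nearest quantization to the lattice `c·ℤ`. -/
def remq (c y : ℝ) : ℝ := y - quant c y

variable {Ω : Type} [MeasurableSpace Ω]

/-- Second moment `E[f²]`, valued in `[0,∞]`. -/
def sqE (μ : Measure Ω) (f : Ω → ℝ) : ℝ≥0∞ := ∫⁻ ω, ENNReal.ofReal ((f ω) ^ 2) ∂μ

/-- `u` is a causal (Borel-measurable) function of the observation process `g`: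
for each `n`, `u n` is a measurable function of `(g 0, …, g n)`. -/
def Causal (u g : ℕ → Ω → ℝ) : Prop :=
  ∀ n : ℕ, ∃ f : (Fin (n + 1) → ℝ) → ℝ, Measurable f ∧ ∀ ω, u n ω = f fun i => g i ω

/-- The closed-loop equations of the two-controller scalar system with initial state `x0`,
disturbances `w`, observation noises `v1, v2`, state `x`, inputs `u1, u2` and
observations `y1, y2`; both controllers are causal. -/
structure ClosedLoop (a : ℝ) (x0 : Ω → ℝ) (w v1 v2 : ℕ → Ω → ℝ)
    (x u1 u2 y1 y2 : ℕ → Ω → ℝ) : Prop where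
  init : ∀ ω, x 0 ω = x0 ω
  dyn : ∀ n ω, x (n + 1) ω = a * x n ω + u1 n ω + u2 n ω + w n ω
  obs1 : ∀ n ω, y1 n ω = x n ω + v1 n ω
  obs2 : ∀ n ω, y2 n ω = x n ω + v2 n ω
  causal1 : Causal u1 y1
  causal2 : Causal u2 y2

/-- Infinite-horizon average cost `J`, valued in `[0,∞]`. -/
def avgCost (μ : Measure Ω) (q r1 r2 : ℝ) (x u1 u2 : ℕ → Ω → ℝ) : ℝ≥0∞ :=
  Filter.limsup
    (fun N : ℕ =>
      (∑ n ∈ Finset.range N,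
          (ENNReal.ofReal q * sqE μ (x n) + ENNReal.ofReal r1 * sqE μ (u1 n) +
            ENNReal.ofReal r2 * sqE μ (u2 n))) / (N : ℝ≥0∞))
    Filter.atTop

/-- The two memoryless linear (bang-bang) strategy pairs `L_lin,bb`. -/
def LinBB (a : ℝ) (u1 u2 y1 y2 : ℕ → Ω → ℝ) : Prop :=
  ((∀ n ω, u1 n ω = -a * y1 n ω) ∧ ∀ n ω, u2 n ω = 0) ∨
    ((∀ n ω, u1 n ω = 0) ∧ ∀ n ω, u2 n ω = -a * y2 n ω)

/-- The `s`-stage signaling strategy family `L_sig,s`, parametrized by `d > 0`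
(with the convention that `u2` at negative times is `0`). -/
def Sig (a : ℝ) (s : ℕ) (u1 u2 y1 y2 : ℕ → Ω → ℝ) : Prop :=
  ∃ d : ℝ, 0 < d ∧
    (∀ n ω, u1 n ω = -a * remq d (y1 n ω)) ∧
    ∀ n ω, u2 n ω =
      -a * (quant (a ^ s * d)
              (y2 n ω - remq (a ^ s * d)
                (∑ i ∈ Finset.Icc 1 s, if i ≤ n then a ^ (i - 1) * u2 (n - i) ω else 0)) +
            remq (a ^ s * d)
              (∑ i ∈ Finset.Icc 1 s, if i ≤ n then a ^ (i - 1) * u2 (n - i) ω else 0))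

/-- The family of all the primitive random variables, for stating mutual independence. -/
def noise (x0 : Ω → ℝ) (w v1 v2 : ℕ → Ω → ℝ) : Option (ℕ × Fin 3) → Ω → ℝ := fun j =>
  j.elim x0 fun p => if p.2 = 0 then w p.1 else if p.2 = 1 then v1 p.1 else v2 p.1

/-- The standing stochastic assumptions: `x0 ~ N(0, V0)`, `w n ~ N(0,1)` i.i.d.,
`v1 n ~ N(0, V1)` i.i.d., `v2 n ~ N(0, V2)` i.i.d., all mutually independent. -/
def GaussSetup (μ : Measure Ω) (V0 V1 V2 : ℝ) (x0 : Ω → ℝ) (w v1 v2 : ℕ → Ω → ℝ) : Prop :=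
  Measurable x0 ∧ (∀ n, Measurable (w n)) ∧ (∀ n, Measurable (v1 n)) ∧
    (∀ n, Measurable (v2 n)) ∧
    Measure.map x0 μ = gaussianReal 0 (Real.toNNReal V0) ∧
    (∀ n, Measure.map (w n) μ = gaussianReal 0 1) ∧
    (∀ n, Measure.map (v1 n) μ = gaussianReal 0 (Real.toNNReal V1)) ∧
    (∀ n, Measure.map (v2 n) μ = gaussianReal 0 (Real.toNNReal V2)) ∧
    iIndepFun (noise x0 w v1 v2) μ

/-- The set of achievable infinite-horizon average costs over closed-loop strategy pairs
satisfying the strategy-class predicate `P`. -/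
def costSet (μ : Measure Ω) (a q r1 r2 : ℝ) (x0 : Ω → ℝ) (w v1 v2 : ℕ → Ω → ℝ)
    (P : (ℕ → Ω → ℝ) → (ℕ → Ω → ℝ) → (ℕ → Ω → ℝ) → (ℕ → Ω → ℝ) → Prop) : Set ℝ≥0∞ :=
  {J | ∃ x u1 u2 y1 y2 : ℕ → Ω → ℝ,
    ClosedLoop a x0 w v1 v2 x u1 u2 y1 y2 ∧ P u1 u2 y1 y2 ∧ J = avgCost μ q r1 r2 x u1 u2}

end LQG

namespace LQG

/-- The average finite-horizon cost over horizon `N`, valued in `[0,∞]`. -/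
def finCost {Ω : Type} [MeasurableSpace Ω] (μ : Measure Ω) (q r1 r2 : ℝ) (N : ℕ)
    (x u1 u2 : ℕ → Ω → ℝ) : ℝ≥0∞ :=
  (∑ n ∈ Finset.range N,
      (ENNReal.ofReal q * sqE μ (x n) + ENNReal.ofReal r1 * sqE μ (u1 n) +
        ENNReal.ofReal r2 * sqE μ (u2 n))) / (N : ℝ≥0∞)

/-- The set of achievable average finite-horizon costs over causal closed-loop strategy
pairs, for a general (square-integrable) initial state `X0`. -/
def finCostSet {Ω : Type} [MeasurableSpace Ω] (μ : Measure Ω) (a q r1 r2 : ℝ) (N : ℕ)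
    (X0 : Ω → ℝ) (w v1 v2 : ℕ → Ω → ℝ) : Set ℝ≥0∞ :=
  {J | ∃ x u1 u2 y1 y2 : ℕ → Ω → ℝ,
    ClosedLoop a X0 w v1 v2 x u1 u2 y1 y2 ∧ J = finCost μ q r1 r2 N x u1 u2}

/-- The family consisting of the two initial-state components and all the noise
variables, for stating mutual independence. -/
def genieFamily {Ω : Type} (ξ' ξ'' : Ω → ℝ) (w v1 v2 : ℕ → Ω → ℝ) :
    Bool ⊕ (ℕ × Fin 3) → Ω → ℝ := fun j =>
  Sum.elim (fun b => if b then ξ' else ξ'')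
    (fun p => if p.2 = 0 then w p.1 else if p.2 = 1 then v1 p.1 else v2 p.1) j

end LQG


/-!
Conditionally on the genie's value `ξ'' = c`, a strategy pair run from the initial state
`ξ' + ξ''` is the same strategy pair run from `ξ' + c`; since `ξ''` is independent of `ξ'` and of
the noise, the cost is the average over `c` of these conditional costs, so some `c` does at least
as well as the average. Starting from `ξ' + c`, subtract from the state its deterministic mean
trajectory and from each input its mean: the controllers can add the known offsets back to their
observations, so this is a causal strategy pair for the initial state `ξ'` (whose mean is `0`),
and centering does not increase second moments.
-/

theorem ProbabilityTheory.iIndepFun.indepFun_restrict_of_disjoint {Ω ι : Type*}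
    [MeasurableSpace Ω] {μ : Measure Ω} {β : ι → Type*} [∀ i, MeasurableSpace (β i)]
    {f : ∀ i, Ω → β i} (h : iIndepFun f μ) (hf : ∀ i, Measurable (f i)) {S T : Set ι}
    (hST : Disjoint S T) :
    IndepFun (fun ω (i : S) => f i ω) (fun ω (i : T) => f i ω) μ := by
  rw [IndepFun_iff_Indep, MeasurableSpace.comap_process_pi, MeasurableSpace.comap_process_pi]
  convert indep_iSup_of_disjoint (fun i => (hf i).comap_le) h.iIndep hST using 1 <;>
    exact iSup_subtype'' _ fun i => MeasurableSpace.comap (f i) inferInstance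

theorem ProbabilityTheory.IndepFun.exists_lintegral_comp_le {Ω α β : Type*}
    [MeasurableSpace Ω] [MeasurableSpace α] [MeasurableSpace β] [Nonempty α]
    {μ : Measure Ω} [IsProbabilityMeasure μ] {Z : Ω → α} {Y : Ω → β}
    (hZ : Measurable Z) (hY : Measurable Y) (h : IndepFun Z Y μ)
    {G : α × β → ℝ≥0∞} (hG : Measurable G) :
    ∃ z, ∫⁻ ω, G (z, Y ω) ∂μ ≤ ∫⁻ ω, G (Z ω, Y ω) ∂μ := by
  have hsection : ∀ z, ∫⁻ ω, G (z, Y ω) ∂μ = ∫⁻ y, G (z, y) ∂(μ.map Y) := fun z =>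
    (lintegral_map (hG.comp measurable_prodMk_left) hY).symm
  have hfubini : ∫⁻ ω, G (Z ω, Y ω) ∂μ = ∫⁻ z, ∫⁻ ω, G (z, Y ω) ∂μ ∂(μ.map Z) := by
    rw [← lintegral_map hG (hZ.prodMk hY),
      (indepFun_iff_map_prod_eq_prod_map_map hZ.aemeasurable hY.aemeasurable).1 h,
      lintegral_prod _ hG.aemeasurable]
    simp_rw [hsection]
  have hmeas : Measurable fun z => ∫⁻ ω, G (z, Y ω) ∂μ := by
    simp_rw [hsection]
    exact hG.lintegral_prod_right'
  have := Measure.isProbabilityMeasure_map (μ := μ) hZ.aemeasurable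
  rw [hfubini]
  exact exists_le_lintegral hmeas.aemeasurable

namespace LQG

section SecondMoment

variable {Ω : Type} [MeasurableSpace Ω] {μ : Measure Ω}

theorem sqE_eq_lintegral_enorm (f : Ω → ℝ) : sqE μ f = ∫⁻ ω, ‖f ω‖ₑ ^ 2 ∂μ := by
  refine lintegral_congr fun ω => ?_
  rw [Real.enorm_eq_ofReal_abs, ← ENNReal.ofReal_pow (abs_nonneg _), sq_abs]

theorem memLp_two_of_sqE_ne_top {f : Ω → ℝ} (hf : AEStronglyMeasurable f μ)
    (h : sqE μ f ≠ ⊤) : MemLp f 2 μ := by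
  rw [memLp_two_iff_integrable_sq hf]
  refine ⟨(hf.aemeasurable.pow_const 2).aestronglyMeasurable, ?_⟩
  rw [hasFiniteIntegral_iff_ofReal (ae_of_all _ fun x => sq_nonneg _)]
  exact h.lt_top

variable [IsProbabilityMeasure μ]

theorem sqE_sub_integral_le {f : Ω → ℝ} (hf : AEStronglyMeasurable f μ) :
    sqE μ (fun ω => f ω - ∫ x, f x ∂μ) ≤ sqE μ f := by
  rw [sqE_eq_lintegral_enorm, sqE_eq_lintegral_enorm, ← evariance, evariance_def' hf]
  exact tsub_le_self

theorem sqE_add_integral_sub_integral_add_le {g h : Ω → ℝ} (hh : AEStronglyMeasurable h μ) :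
    sqE μ (fun ω => h ω + ((∫ x, g x ∂μ) - ∫ x, (g x + h x) ∂μ)) ≤ sqE μ h := by
  by_cases hhi : Integrable h μ
  · by_cases hgi : Integrable g μ
    · simp only [integral_add hgi hhi, sub_add_cancel_left, ← sub_eq_add_neg]
      exact sqE_sub_integral_le hh
    · have hghi : ¬Integrable (fun x => g x + h x) μ := fun hghi =>
        hgi (by simpa [Pi.sub_def] using hghi.sub hhi)
      simp [integral_undef hgi, integral_undef hghi]
  · have htop : sqE μ h = ⊤ := by
      by_contra hne
      exact hhi ((memLp_two_of_sqE_ne_top hh hne).integrable one_le_two)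
    simp [htop]

end SecondMoment

section Centering

variable {Ω : Type} {a : ℝ} {x0 x0' : Ω → ℝ} {w v1 v2 x u1 u2 y1 y2 : ℕ → Ω → ℝ}

theorem Causal.translate {u g : ℕ → Ω → ℝ} (h : Causal u g) (m β : ℕ → ℝ) :
    Causal (fun n ω => u n ω + β n) (fun n ω => g n ω - m n) := by
  intro n
  obtain ⟨f, hf, hu⟩ := h n
  refine ⟨fun v => f (fun i => v i + m i) + β n, by fun_prop, fun ω => ?_⟩
  simp [hu]

theorem ClosedLoop.translate (h : ClosedLoop a x0 w v1 v2 x u1 u2 y1 y2) (m β1 β2 : ℕ → ℝ)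
    (h0 : ∀ ω, x0 ω = x0' ω + m 0) (hm : ∀ n, m (n + 1) = a * m n - β1 n - β2 n) :
    ClosedLoop a x0' w v1 v2 (fun n ω => x n ω - m n) (fun n ω => u1 n ω + β1 n)
      (fun n ω => u2 n ω + β2 n) (fun n ω => y1 n ω - m n) (fun n ω => y2 n ω - m n) where
  init ω := by simp only [h.init, h0, add_sub_cancel_right]
  dyn n ω := by rw [h.dyn, hm]; ring
  obs1 n ω := by rw [h.obs1]; ring
  obs2 n ω := by rw [h.obs2]; ring
  causal1 := h.causal1.translate m β1
  causal2 := h.causal2.translate m β2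

variable [MeasurableSpace Ω] {μ : Measure Ω}

theorem ClosedLoop.integral_state_succ (h : ClosedLoop a x0 w v1 v2 x u1 u2 y1 y2) {n : ℕ}
    (hx : Integrable (x n) μ) (hx' : Integrable (x (n + 1)) μ) (hw : Integrable (w n) μ)
    (hw0 : ∫ ω, w n ω ∂μ = 0) :
    ∫ ω, x (n + 1) ω ∂μ = a * ∫ ω, x n ω ∂μ + ∫ ω, (u1 n ω + u2 n ω) ∂μ := by
  have hinputs : (fun ω => u1 n ω + u2 n ω) = fun ω => x (n + 1) ω - a * x n ω - w n ω := by
    funext ω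
    rw [h.dyn]
    ring
  have hax : Integrable (fun ω => a * x n ω) μ := hx.const_mul a
  rw [hinputs, integral_sub (f := fun ω => x (n + 1) ω - a * x n ω) (hx'.sub hax) hw,
    integral_sub hx' hax, integral_const_mul, hw0]
  ring

variable {q r1 r2 : ℝ} {N : ℕ}

theorem finCost_mono {x' u1' u2' : ℕ → Ω → ℝ}
    (hx : ∀ n < N, ENNReal.ofReal q * sqE μ (x' n) ≤ ENNReal.ofReal q * sqE μ (x n))
    (hu1 : ∀ n < N, sqE μ (u1' n) ≤ sqE μ (u1 n)) (hu2 : ∀ n < N, sqE μ (u2' n) ≤ sqE μ (u2 n)) :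
    finCost μ q r1 r2 N x' u1' u2' ≤ finCost μ q r1 r2 N x u1 u2 := by
  unfold finCost
  gcongr ?_ / _
  refine Finset.sum_le_sum fun n hn => ?_
  rw [Finset.mem_range] at hn
  gcongr ?_ + ?_ + ?_
  exacts [hx n hn, by gcongr; exact hu1 n hn, by gcongr; exact hu2 n hn]

theorem sqE_ne_top_of_finCost_ne_top (hfin : finCost μ q r1 r2 N x u1 u2 ≠ ⊤) (hq : 0 < q)
    {n : ℕ} (hn : n < N) : sqE μ (x n) ≠ ⊤ := by
  intro htop
  apply hfin
  unfold finCost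
  refine ENNReal.div_eq_top.2 (Or.inr ⟨ENNReal.sum_eq_top.2 ⟨n, Finset.mem_range.2 hn, ?_⟩,
    ENNReal.natCast_ne_top N⟩)
  rw [htop, ENNReal.mul_top (ENNReal.ofReal_pos.2 hq).ne', top_add, top_add]

theorem sInf_finCostSet_le_finCost_of_closedLoop_add_const [IsProbabilityMeasure μ]
    {ξ : Ω → ℝ} {c : ℝ} (h : ClosedLoop a (fun ω => ξ ω + c) w v1 v2 x u1 u2 y1 y2)
    (hξ : Integrable ξ μ) (hξ0 : ∫ ω, ξ ω ∂μ = 0)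
    (hw : ∀ n, Integrable (w n) μ) (hw0 : ∀ n, ∫ ω, w n ω ∂μ = 0)
    (hx : ∀ n, Measurable (x n)) (hu1 : ∀ n, Measurable (u1 n)) (hu2 : ∀ n, Measurable (u2 n)) :
    sInf (finCostSet μ a q r1 r2 N ξ w v1 v2) ≤ finCost μ q r1 r2 N x u1 u2 := by
  -- `β2` is not simply `-∫ u2`: the sum `β1 + β2 = -∫ (u1 + u2)` is the mean input even when
  -- `u1` alone is not integrable (where `∫` takes the junk value `0`).
  set β1 : ℕ → ℝ := fun n => -∫ ω, u1 n ω ∂μ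
  set β2 : ℕ → ℝ := fun n => (∫ ω, u1 n ω ∂μ) - ∫ ω, (u1 n ω + u2 n ω) ∂μ
  set m : ℕ → ℝ := fun n => Nat.rec c (fun k mk => a * mk - β1 k - β2 k) n
  have hmem : finCost μ q r1 r2 N (fun n ω => x n ω - m n) (fun n ω => u1 n ω + β1 n)
      (fun n ω => u2 n ω + β2 n) ∈ finCostSet μ a q r1 r2 N ξ w v1 v2 :=
    ⟨_, _, _, _, _, h.translate m β1 β2 (fun _ => rfl) (fun _ => rfl), rfl⟩
  refine (sInf_le hmem).trans ?_
  rcases eq_or_ne (finCost μ q r1 r2 N x u1 u2) ⊤ with htop | hfin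
  · simp [htop]
  have hmean : 0 < q → ∀ n < N, m n = ∫ ω, x n ω ∂μ := by
    intro hq n
    have hint : ∀ k < N, Integrable (x k) μ := fun k hk =>
      (memLp_two_of_sqE_ne_top (hx k).aestronglyMeasurable
        (sqE_ne_top_of_finCost_ne_top hfin hq hk)).integrable one_le_two
    induction n with
    | zero =>
      intro _
      simp [m, h.init, integral_add hξ (integrable_const c), hξ0]
    | succ n ih =>
      intro hn
      rw [h.integral_state_succ (hint n (by omega)) (hint _ hn) (hw n) (hw0 n), ← ih (by omega)]
      simp only [m, β1, β2]
      ring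
  refine finCost_mono (fun n hn => ?_) (fun n _ => ?_) (fun n _ => ?_)
  · rcases le_or_gt q 0 with hq | hq
    · simp [ENNReal.ofReal_of_nonpos hq]
    · gcongr
      simp only [hmean hq n hn]
      exact sqE_sub_integral_le (hx n).aestronglyMeasurable
  · simpa [β1, ← sub_eq_add_neg] using sqE_sub_integral_le (hu1 n).aestronglyMeasurable
  · exact sqE_add_integral_sub_integral_add_le (hu2 n).aestronglyMeasurable

end Centering

def pathCost (q r1 r2 : ℝ) (N : ℕ) (x u1 u2 : ℕ → ℝ) : ℝ≥0∞ :=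
  (∑ n ∈ Finset.range N,
      (ENNReal.ofReal q * ENNReal.ofReal (x n ^ 2) +
        ENNReal.ofReal r1 * ENNReal.ofReal (u1 n ^ 2) +
        ENNReal.ofReal r2 * ENNReal.ofReal (u2 n ^ 2))) / (N : ℝ≥0∞)

section PathCost

variable {q r1 r2 : ℝ} {N : ℕ}

theorem measurable_pathCost {β : Type*} [MeasurableSpace β] {x u1 u2 : ℕ → β → ℝ}
    (hx : ∀ n, Measurable (x n)) (hu1 : ∀ n, Measurable (u1 n)) (hu2 : ∀ n, Measurable (u2 n)) :
    Measurable fun b => pathCost q r1 r2 N (fun n => x n b) (fun n => u1 n b) (fun n => u2 n b) := by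
  unfold pathCost
  fun_prop

theorem finCost_eq_lintegral_pathCost {Ω : Type} [MeasurableSpace Ω] {μ : Measure Ω}
    {x u1 u2 : ℕ → Ω → ℝ}
    (hx : ∀ n, Measurable (x n)) (hu1 : ∀ n, Measurable (u1 n)) (hu2 : ∀ n, Measurable (u2 n)) :
    finCost μ q r1 r2 N x u1 u2 =
      ∫⁻ ω, pathCost q r1 r2 N (fun n => x n ω) (fun n => u1 n ω) (fun n => u2 n ω) ∂μ := by
  unfold finCost pathCost sqE
  simp_rw [div_eq_mul_inv]
  rw [lintegral_mul_const _ (by fun_prop), lintegral_finsetSum _ (fun n _ => by fun_prop)]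
  congr 1
  refine Finset.sum_congr rfl fun n _ => ?_
  rw [lintegral_add_left (by fun_prop), lintegral_add_left (by fun_prop),
    lintegral_const_mul _ (by fun_prop), lintegral_const_mul _ (by fun_prop),
    lintegral_const_mul _ (by fun_prop)]

end PathCost

-- The primitive data `(x0, w, v1, v2)` of one sample path.
abbrev Primitives := ℝ × (ℕ → ℝ) × (ℕ → ℝ) × (ℕ → ℝ)

def primitives {Ω : Type} (x0 : Ω → ℝ) (w v1 v2 : ℕ → Ω → ℝ) (ω : Ω) : Primitives :=
  (x0 ω, fun n => w n ω, fun n => v1 n ω, fun n => v2 n ω)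

theorem measurable_primitives {Ω : Type} [MeasurableSpace Ω] {x0 : Ω → ℝ} {w v1 v2 : ℕ → Ω → ℝ}
    (hx0 : Measurable x0) (hw : ∀ n, Measurable (w n)) (hv1 : ∀ n, Measurable (v1 n))
    (hv2 : ∀ n, Measurable (v2 n)) : Measurable (primitives x0 w v1 v2) := by
  unfold primitives
  fun_prop

section Solution

variable (a : ℝ) (f1 f2 : (n : ℕ) → (Fin (n + 1) → ℝ) → ℝ)

def solState (p : Primitives) : ℕ → ℝ
  | 0 => p.1
  | n + 1 => a * solState p n + f1 n (fun i => solState p i + p.2.2.1 i)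
      + f2 n (fun i => solState p i + p.2.2.2 i) + p.2.1 n
decreasing_by all_goals grind

def solInput1 (p : Primitives) (n : ℕ) : ℝ := f1 n fun i => solState a f1 f2 p i + p.2.2.1 i

def solInput2 (p : Primitives) (n : ℕ) : ℝ := f2 n fun i => solState a f1 f2 p i + p.2.2.2 i

def solCost (q r1 r2 : ℝ) (N : ℕ) (p : Primitives) : ℝ≥0∞ :=
  pathCost q r1 r2 N (solState a f1 f2 p) (solInput1 a f1 f2 p) (solInput2 a f1 f2 p)

theorem solState_zero (p : Primitives) : solState a f1 f2 p 0 = p.1 := by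
  rw [solState]

theorem solState_succ (p : Primitives) (n : ℕ) :
    solState a f1 f2 p (n + 1) =
      a * solState a f1 f2 p n + solInput1 a f1 f2 p n + solInput2 a f1 f2 p n + p.2.1 n := by
  rw [solState]
  rfl

variable {a f1 f2}

theorem measurable_solState (hf1 : ∀ n, Measurable (f1 n)) (hf2 : ∀ n, Measurable (f2 n))
    (n : ℕ) : Measurable fun p => solState a f1 f2 p n := by
  induction n using Nat.strong_induction_on with
  | _ n ih =>
    cases n with
    | zero => simpa only [solState_zero] using measurable_fst
    | succ n =>
      replace ih : ∀ i : Fin (n + 1), Measurable fun p => solState a f1 f2 p i :=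
        fun i => ih i i.isLt
      have := ih (Fin.last n)
      simp only [solState_succ, solInput1, solInput2]
      fun_prop

theorem measurable_solInput1 (hf1 : ∀ n, Measurable (f1 n)) (hf2 : ∀ n, Measurable (f2 n))
    (n : ℕ) : Measurable fun p => solInput1 a f1 f2 p n := by
  have := measurable_solState (a := a) hf1 hf2
  unfold solInput1
  fun_prop

theorem measurable_solInput2 (hf1 : ∀ n, Measurable (f1 n)) (hf2 : ∀ n, Measurable (f2 n))
    (n : ℕ) : Measurable fun p => solInput2 a f1 f2 p n := by
  have := measurable_solState (a := a) hf1 hf2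
  unfold solInput2
  fun_prop

theorem measurable_solCost (hf1 : ∀ n, Measurable (f1 n)) (hf2 : ∀ n, Measurable (f2 n))
    (q r1 r2 : ℝ) (N : ℕ) : Measurable (solCost a f1 f2 q r1 r2 N) :=
  measurable_pathCost (measurable_solState hf1 hf2) (measurable_solInput1 hf1 hf2)
    (measurable_solInput2 hf1 hf2)

variable {Ω : Type}

theorem closedLoop_solState (hf1 : ∀ n, Measurable (f1 n)) (hf2 : ∀ n, Measurable (f2 n))
    (x0 : Ω → ℝ) (w v1 v2 : ℕ → Ω → ℝ) :
    ClosedLoop a x0 w v1 v2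
      (fun n ω => solState a f1 f2 (primitives x0 w v1 v2 ω) n)
      (fun n ω => solInput1 a f1 f2 (primitives x0 w v1 v2 ω) n)
      (fun n ω => solInput2 a f1 f2 (primitives x0 w v1 v2 ω) n)
      (fun n ω => solState a f1 f2 (primitives x0 w v1 v2 ω) n + v1 n ω)
      (fun n ω => solState a f1 f2 (primitives x0 w v1 v2 ω) n + v2 n ω) where
  init _ := solState_zero a f1 f2 _
  dyn n _ := solState_succ a f1 f2 _ n
  obs1 _ _ := rfl
  obs2 _ _ := rfl
  causal1 n := ⟨f1 n, hf1 n, fun _ => rfl⟩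
  causal2 n := ⟨f2 n, hf2 n, fun _ => rfl⟩

namespace ClosedLoop

variable {x0 : Ω → ℝ} {w v1 v2 x u1 u2 y1 y2 : ℕ → Ω → ℝ}

theorem state_eq_solState (h : ClosedLoop a x0 w v1 v2 x u1 u2 y1 y2)
    (hu1 : ∀ n ω, u1 n ω = f1 n fun i => y1 i ω) (hu2 : ∀ n ω, u2 n ω = f2 n fun i => y2 i ω)
    (n : ℕ) (ω : Ω) : x n ω = solState a f1 f2 (primitives x0 w v1 v2 ω) n := by
  induction n using Nat.strong_induction_on with
  | _ n ih =>
    cases n with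
    | zero => rw [h.init, solState_zero]; rfl
    | succ n =>
      rw [h.dyn, solState_succ, hu1, hu2, ih n (by omega), solInput1, solInput2]
      simp only [h.obs1, h.obs2, ih _ (Fin.is_lt _)]
      rfl

theorem input1_eq_solInput1 (h : ClosedLoop a x0 w v1 v2 x u1 u2 y1 y2)
    (hu1 : ∀ n ω, u1 n ω = f1 n fun i => y1 i ω) (hu2 : ∀ n ω, u2 n ω = f2 n fun i => y2 i ω)
    (n : ℕ) (ω : Ω) : u1 n ω = solInput1 a f1 f2 (primitives x0 w v1 v2 ω) n := by
  rw [hu1, solInput1]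
  simp only [h.obs1, h.state_eq_solState hu1 hu2]
  rfl

theorem input2_eq_solInput2 (h : ClosedLoop a x0 w v1 v2 x u1 u2 y1 y2)
    (hu1 : ∀ n ω, u1 n ω = f1 n fun i => y1 i ω) (hu2 : ∀ n ω, u2 n ω = f2 n fun i => y2 i ω)
    (n : ℕ) (ω : Ω) : u2 n ω = solInput2 a f1 f2 (primitives x0 w v1 v2 ω) n := by
  rw [hu2, solInput2]
  simp only [h.obs2, h.state_eq_solState hu1 hu2]
  rfl

theorem finCost_eq_lintegral_solCost [MeasurableSpace Ω] {μ : Measure Ω}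
    (h : ClosedLoop a x0 w v1 v2 x u1 u2 y1 y2)
    (hf1 : ∀ n, Measurable (f1 n)) (hf2 : ∀ n, Measurable (f2 n))
    (hu1 : ∀ n ω, u1 n ω = f1 n fun i => y1 i ω) (hu2 : ∀ n ω, u2 n ω = f2 n fun i => y2 i ω)
    (hP : Measurable (primitives x0 w v1 v2)) (q r1 r2 : ℝ) (N : ℕ) :
    finCost μ q r1 r2 N x u1 u2 =
      ∫⁻ ω, solCost a f1 f2 q r1 r2 N (primitives x0 w v1 v2 ω) ∂μ := by
  rw [funext₂ (h.state_eq_solState hu1 hu2), funext₂ (h.input1_eq_solInput1 hu1 hu2),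
    funext₂ (h.input2_eq_solInput2 hu1 hu2)]
  exact finCost_eq_lintegral_pathCost (fun n => (measurable_solState hf1 hf2 n).comp hP)
    (fun n => (measurable_solInput1 hf1 hf2 n).comp hP)
    (fun n => (measurable_solInput2 hf1 hf2 n).comp hP)

end ClosedLoop

theorem sInf_finCostSet_le_lintegral_solCost [MeasurableSpace Ω] {μ : Measure Ω}
    [IsProbabilityMeasure μ] (hf1 : ∀ n, Measurable (f1 n)) (hf2 : ∀ n, Measurable (f2 n))
    {q r1 r2 : ℝ} {N : ℕ} {ξ : Ω → ℝ} {w v1 v2 : ℕ → Ω → ℝ} (hξ : Measurable ξ)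
    (hξi : Integrable ξ μ) (hξ0 : ∫ ω, ξ ω ∂μ = 0) (hw : ∀ n, Measurable (w n))
    (hwi : ∀ n, Integrable (w n) μ) (hw0 : ∀ n, ∫ ω, w n ω ∂μ = 0)
    (hv1 : ∀ n, Measurable (v1 n)) (hv2 : ∀ n, Measurable (v2 n)) (c : ℝ) :
    sInf (finCostSet μ a q r1 r2 N ξ w v1 v2) ≤
      ∫⁻ ω, solCost a f1 f2 q r1 r2 N (primitives (fun ω => ξ ω + c) w v1 v2 ω) ∂μ := by
  have hP := measurable_primitives (hξ.add_const c) hw hv1 hv2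
  have hcl := closedLoop_solState (a := a) hf1 hf2 (fun ω => ξ ω + c) w v1 v2
  rw [← hcl.finCost_eq_lintegral_solCost hf1 hf2 (fun _ _ => rfl) (fun _ _ => rfl) hP]
  exact sInf_finCostSet_le_finCost_of_closedLoop_add_const hcl hξi hξ0 hwi hw0
    (fun n => (measurable_solState hf1 hf2 n).comp hP)
    (fun n => (measurable_solInput1 hf1 hf2 n).comp hP)
    (fun n => (measurable_solInput2 hf1 hf2 n).comp hP)

end Solution

theorem indepFun_primitives_of_iIndepFun_genieFamily {Ω : Type} [MeasurableSpace Ω]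
    {μ : Measure Ω} {ξ' ξ'' : Ω → ℝ} {w v1 v2 : ℕ → Ω → ℝ}
    (hξ' : Measurable ξ') (hξ'' : Measurable ξ'') (hw : ∀ n, Measurable (w n))
    (hv1 : ∀ n, Measurable (v1 n)) (hv2 : ∀ n, Measurable (v2 n))
    (h : iIndepFun (genieFamily ξ' ξ'' w v1 v2) μ) :
    IndepFun ξ'' (primitives ξ' w v1 v2) μ := by
  have hmeas : ∀ j, Measurable (genieFamily ξ' ξ'' w v1 v2 j) := by
    rintro ((_ | _) | ⟨n, k⟩)
    · exact hξ''
    · exact hξ'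
    · fin_cases k
      exacts [hw n, hv1 n, hv2 n]
  let S : Set (Bool ⊕ (ℕ × Fin 3)) := {Sum.inl false}
  have hsplit := h.indepFun_restrict_of_disjoint hmeas (disjoint_compl_right (a := S))
  exact hsplit.comp (φ := fun g : S → ℝ => g ⟨Sum.inl false, rfl⟩)
    (ψ := fun g : ↥Sᶜ → ℝ => (g ⟨Sum.inl true, by simp [S]⟩,
      fun n => g ⟨Sum.inr (n, 0), by simp [S]⟩, fun n => g ⟨Sum.inr (n, 1), by simp [S]⟩,
      fun n => g ⟨Sum.inr (n, 2), by simp [S]⟩))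
    (by fun_prop) (by fun_prop)

end LQG

theorem statement18_general (Ω : Type) [MeasurableSpace Ω] (μ : Measure Ω) [IsProbabilityMeasure μ]
    (a q r1 r2 : ℝ) (ξ' ξ'' : Ω → ℝ) (w v1 v2 : ℕ → Ω → ℝ)
    (hmξ' : Measurable ξ') (hmξ'' : Measurable ξ'')
    (hL2ξ' : MeasureTheory.MemLp ξ' 2 μ)
    (hmean : ∫ ω, ξ' ω ∂μ = 0)
    (hmw : ∀ n, Measurable (w n)) (hmv1 : ∀ n, Measurable (v1 n))
    (hmv2 : ∀ n, Measurable (v2 n))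
    (hw : ∀ n, Measure.map (w n) μ = gaussianReal 0 1)
    (hindep : iIndepFun (LQG.genieFamily ξ' ξ'' w v1 v2) μ) :
    ∀ N : ℕ, 1 ≤ N →
      sInf (LQG.finCostSet μ a q r1 r2 N ξ' w v1 v2) ≤
        sInf (LQG.finCostSet μ a q r1 r2 N (fun ω => ξ' ω + ξ'' ω) w v1 v2) := by
  intro N _
  refine le_sInf ?_
  rintro _ ⟨x, u1, u2, y1, y2, hcl, rfl⟩
  choose f1 hf1 hu1 using hcl.causal1
  choose f2 hf2 hu2 using hcl.causal2
  have hwi : ∀ n, Integrable (w n) μ := fun n =>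
    HasGaussianLaw.integrable ⟨hw n ▸ inferInstance⟩
  have hw0 : ∀ n, ∫ ω, w n ω ∂μ = 0 := fun n =>
    (HasLaw.integral_eq ⟨(hmw n).aemeasurable, hw n⟩).trans integral_id_gaussianReal
  obtain ⟨c, hc⟩ := (LQG.indepFun_primitives_of_iIndepFun_genieFamily hmξ' hmξ'' hmw hmv1 hmv2
    hindep).exists_lintegral_comp_le hmξ'' (LQG.measurable_primitives hmξ' hmw hmv1 hmv2)
    (G := fun p => LQG.solCost a f1 f2 q r1 r2 N (p.2.1 + p.1, p.2.2))
    ((LQG.measurable_solCost hf1 hf2 q r1 r2 N).comp (by fun_prop))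
  calc sInf (LQG.finCostSet μ a q r1 r2 N ξ' w v1 v2)
      ≤ ∫⁻ ω, LQG.solCost a f1 f2 q r1 r2 N (LQG.primitives (fun ω => ξ' ω + c) w v1 v2 ω) ∂μ :=
        LQG.sInf_finCostSet_le_lintegral_solCost hf1 hf2 hmξ' (hL2ξ'.integrable one_le_two) hmean
          hmw hwi hw0 hmv1 hmv2 c
    _ ≤ ∫⁻ ω, LQG.solCost a f1 f2 q r1 r2 N
          (LQG.primitives (fun ω => ξ' ω + ξ'' ω) w v1 v2 ω) ∂μ := hc
    _ = LQG.finCost μ q r1 r2 N x u1 u2 :=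
        (hcl.finCost_eq_lintegral_solCost hf1 hf2 hu1 hu2
          (LQG.measurable_primitives (hmξ'.add hmξ'') hmw hmv1 hmv2) q r1 r2 N).symm

/-- Monotonicity of the optimal finite-horizon cost in the initial
state (genie lemma): if `ξ'` and `ξ''` are independent square-integrable random
variables with `E[ξ'] = 0`, both independent of the mutually independent i.i.d. Gaussian
noise sequences, then for every horizon `N ≥ 1` and all weights `q, r1, r2 ≥ 0`,
the optimal finite-horizon cost with initial state `ξ' + ξ''` is at least the optimal
finite-horizon cost with initial state `ξ'`. -/
theorem statement18 (Ω : Type) [MeasurableSpace Ω] (μ : Measure Ω) [IsProbabilityMeasure μ]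
    (a q r1 r2 σv1 σv2 : ℝ) (ξ' ξ'' : Ω → ℝ) (w v1 v2 : ℕ → Ω → ℝ)
    (hq : 0 ≤ q) (hr1 : 0 ≤ r1) (hr2 : 0 ≤ r2)
    (hmξ' : Measurable ξ') (hmξ'' : Measurable ξ'')
    (hL2ξ' : MeasureTheory.MemLp ξ' 2 μ) (hL2ξ'' : MeasureTheory.MemLp ξ'' 2 μ)
    (hmean : ∫ ω, ξ' ω ∂μ = 0)
    (hmw : ∀ n, Measurable (w n)) (hmv1 : ∀ n, Measurable (v1 n))
    (hmv2 : ∀ n, Measurable (v2 n))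
    (hw : ∀ n, Measure.map (w n) μ = gaussianReal 0 1)
    (hv1 : ∀ n, Measure.map (v1 n) μ = gaussianReal 0 (Real.toNNReal (σv1 ^ 2)))
    (hv2 : ∀ n, Measure.map (v2 n) μ = gaussianReal 0 (Real.toNNReal (σv2 ^ 2)))
    (hindep : iIndepFun (LQG.genieFamily ξ' ξ'' w v1 v2) μ) :
    ∀ N : ℕ, 1 ≤ N →
      sInf (LQG.finCostSet μ a q r1 r2 N ξ' w v1 v2) ≤
        sInf (LQG.finCostSet μ a q r1 r2 N (fun ω => ξ' ω + ξ'' ω) w v1 v2) :=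
  statement18_general Ω μ a q r1 r2 ξ' ξ'' w v1 v2 hmξ' hmξ'' hL2ξ' hmean hmw hmv1 hmv2 hw hindep
end
end
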